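/- arXiv:1503.08286 — 5 statements merged into one kernel-verified Lean document; each statement's English description precedes it below -/
import Mathlib

section
/- Let A be an m×n₁ real matrix, B an m×n₂ real matrix, x₀ ∈ ℝ^{n₁}, y₀ ∈ ℝ^{n₂}, and set z = A x₀ + B y₀. Then the generalized demixing problem (GDP) succeeds (i.e., (x₀,y₀) is the unique minimizer) if and only if all three of the following hold: null(A) ∩ S(x₀) = {0}, null(B) ∩ S(y₀) = {0}, and (−A·S(x₀)) ∩ (B·S(y₀)) = {0}. In other words: [∀ x ∈ ℝ^{n₁}, ∀ y ∈ ℝ^{n₂}, if ‖y‖₁ ≤ ‖y₀‖₁, A x + B y = z, and ‖x‖₁ ≤ ‖x₀‖₁, then x = x₀ and y = y₀] if and only if [(∀ h, A h = 0 ∧ ‖x₀ + h‖₁ ≤ ‖x₀‖₁ → h = 0) ∧ (∀ h, B h = 0 ∧ ‖y₀ + h‖₁ ≤ ‖y₀‖₁ → h = 0) ∧ (∀ x̄ ȳ, ‖x₀ + x̄‖₁ ≤ ‖x₀‖₁ ∧ ‖y₀ + ȳ‖₁ ≤ ‖y₀‖₁ ∧ −A x̄ = B ȳ → A x̄ = 0)].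 -/
/-- Theorem 1 (necessary and sufficient condition for generalized demixing):
(GDP) has `(x₀, y₀)` as its unique minimizer iff
`null(A) ∩ S(x₀) = {0}`, `null(B) ∩ S(y₀) = {0}` and `(-A·S(x₀)) ∩ (B·S(y₀)) = {0}`. -/
theorem gdp_succeeds_iff {m n₁ n₂ : ℕ}
    (A : Matrix (Fin m) (Fin n₁) ℝ) (B : Matrix (Fin m) (Fin n₂) ℝ)
    (x₀ : Fin n₁ → ℝ) (y₀ : Fin n₂ → ℝ) (z : Fin m → ℝ)
    (hz : z = A.mulVec x₀ + B.mulVec y₀) :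
    (∀ x : Fin n₁ → ℝ, ∀ y : Fin n₂ → ℝ,
        (∑ i, |y i|) ≤ (∑ i, |y₀ i|) →
        A.mulVec x + B.mulVec y = z →
        (∑ i, |x i|) ≤ (∑ i, |x₀ i|) →
        x = x₀ ∧ y = y₀) ↔
      ((∀ h : Fin n₁ → ℝ,
          A.mulVec h = 0 ∧ (∑ i, |x₀ i + h i|) ≤ (∑ i, |x₀ i|) → h = 0) ∧
       (∀ h : Fin n₂ → ℝ,
          B.mulVec h = 0 ∧ (∑ i, |y₀ i + h i|) ≤ (∑ i, |y₀ i|) → h = 0) ∧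
       (∀ (xb : Fin n₁ → ℝ) (yb : Fin n₂ → ℝ),
          (∑ i, |x₀ i + xb i|) ≤ (∑ i, |x₀ i|) ∧
          (∑ i, |y₀ i + yb i|) ≤ (∑ i, |y₀ i|) ∧
          -(A.mulVec xb) = B.mulVec yb →
          A.mulVec xb = 0)) := by
  constructor
  · intro H
    refine ⟨?_, ?_, ?_⟩
    · rintro h ⟨hA, hnorm⟩
      have := H (x₀ + h) y₀ le_rfl (by
        simp [Matrix.mulVec_add, hA, hz, add_comm, add_assoc, add_left_comm]) (by simpa using hnorm)
      have hx := this.1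
      funext i
      have h' : x₀ i + h i = x₀ i := congrFun hx i
      show h i = 0
      linarith
    · rintro h ⟨hB, hnorm⟩
      have := H x₀ (y₀ + h) (by simpa using hnorm) (by
        simp [Matrix.mulVec_add, hB, hz]) le_rfl
      have hy := this.2
      funext i
      have h' : y₀ i + h i = y₀ i := congrFun hy i
      show h i = 0
      linarith
    · rintro xb yb ⟨hxn, hyn, heq⟩
      have := H (x₀ + xb) (y₀ + yb) (by simpa using hyn) (by
        have : B.mulVec yb = -(A.mulVec xb) := heq.symm
        simp only [Matrix.mulVec_add, hz, this]
        abel) (by simpa using hxn)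
      have hx := this.1
      have hxb : xb = 0 := by
        funext i
        have h' : x₀ i + xb i = x₀ i := congrFun hx i
        show xb i = 0
        linarith
      simp [hxb]
  · rintro ⟨h1, h2, h3⟩ x y hy hfeas hx
    set xb := x - x₀ with hxb
    set yb := y - y₀ with hyb
    have hxeq : x = x₀ + xb := by simp [hxb]
    have hyeq : y = y₀ + yb := by simp [hyb]
    have hsum : A.mulVec xb + B.mulVec yb = 0 := by
      have : A.mulVec (x - x₀) + B.mulVec (y - y₀) = 0 := by
        simp only [Matrix.mulVec_sub]
        have := hfeas
        rw [hz] at this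
        have h' : A.mulVec x + B.mulVec y - (A.mulVec x₀ + B.mulVec y₀) = 0 := by
          rw [this]; abel
        calc A.mulVec x - A.mulVec x₀ + (B.mulVec y - B.mulVec y₀)
            = A.mulVec x + B.mulVec y - (A.mulVec x₀ + B.mulVec y₀) := by abel
          _ = 0 := h'
      simpa [hxb, hyb] using this
    have hAeq : -(A.mulVec xb) = B.mulVec yb := by
      have := hsum
      funext i
      have := congrFun hsum i
      simp only [Pi.add_apply, Pi.zero_apply] at this
      simp only [Pi.neg_apply]
      linarith
    have hA0 : A.mulVec xb = 0 := by
      apply h3 xb yb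
      refine ⟨?_, ?_, hAeq⟩
      · simpa [hxeq] using hx
      · simpa [hyeq] using hy
    have hB0 : B.mulVec yb = 0 := by rw [← hAeq, hA0]; simp
    have hxb0 : xb = 0 := h1 xb ⟨hA0, by simpa [hxeq] using hx⟩
    have hyb0 : yb = 0 := h2 yb ⟨hB0, by simpa [hyeq] using hy⟩
    constructor
    · rw [hxeq, hxb0]; simp
    · rw [hyeq, hyb0]; simp
end

section
/- Let A be an m×n₁ real matrix, B an m×n₂ real matrix, x₀ ∈ ℝ^{n₁}, y₀ ∈ ℝ^{n₂}, and set z = A x₀ + B y₀. Assume: (i) every h ∈ ℝ^{n₁} with A h = 0 and ‖x₀ + h‖₁ ≤ ‖x₀‖₁ satisfies h = 0; (ii) every h ∈ ℝ^{n₂} with B h = 0 and ‖y₀ + h‖₁ ≤ ‖y₀‖₁ satisfies h = 0; (iii) whenever ‖x₀ + x̄‖₁ ≤ ‖x₀‖₁, ‖y₀ + ȳ‖₁ ≤ ‖y₀‖₁, and −A x̄ = B ȳ, then A x̄ = 0. Then the generalized demixing problem (GDP) succeeds: every (x*, y*) with ‖y*‖₁ ≤ ‖y₀‖₁ and A x*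 + B y* = z satisfies either ‖x*‖₁ > ‖x₀‖₁ or (x*, y*) = (x₀, y₀). -/
/-- The sufficiency direction of Theorem 1: the three conditions imply that (GDP) succeeds. -/
theorem gdp_sufficiency {m n₁ n₂ : ℕ}
    (A : Matrix (Fin m) (Fin n₁) ℝ) (B : Matrix (Fin m) (Fin n₂) ℝ)
    (x₀ : Fin n₁ → ℝ) (y₀ : Fin n₂ → ℝ) (z : Fin m → ℝ)
    (hz : z = A.mulVec x₀ + B.mulVec y₀)
    (h₁ : ∀ h : Fin n₁ → ℝ,
        A.mulVec h = 0 → (∑ i, |x₀ i + h i|) ≤ (∑ i, |x₀ i|) → h = 0)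
    (h₂ : ∀ h : Fin n₂ → ℝ,
        B.mulVec h = 0 → (∑ i, |y₀ i + h i|) ≤ (∑ i, |y₀ i|) → h = 0)
    (h₃ : ∀ (xb : Fin n₁ → ℝ) (yb : Fin n₂ → ℝ),
        (∑ i, |x₀ i + xb i|) ≤ (∑ i, |x₀ i|) →
        (∑ i, |y₀ i + yb i|) ≤ (∑ i, |y₀ i|) →
        -(A.mulVec xb) = B.mulVec yb →
        A.mulVec xb = 0) :
    ∀ xs : Fin n₁ → ℝ, ∀ ys : Fin n₂ → ℝ,
      (∑ i, |ys i|) ≤ (∑ i, |y₀ i|) →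
      A.mulVec xs + B.mulVec ys = z →
      ((∑ i, |x₀ i|) < (∑ i, |xs i|) ∨ (xs = x₀ ∧ ys = y₀)) := by
  intro xs ys hy hAB
  rcases lt_or_ge (∑ i, |x₀ i|) (∑ i, |xs i|) with h | h
  · exact Or.inl h
  · right
    set xb := xs - x₀ with hxb
    set yb := ys - y₀ with hyb
    have hx' : (∑ i, |x₀ i + xb i|) ≤ (∑ i, |x₀ i|) := by
      simpa [hxb, sub_eq_add_neg, add_comm, add_left_comm, add_assoc] using h
    have hy' : (∑ i, |y₀ i + yb i|) ≤ (∑ i, |y₀ i|) := by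
      simpa [hyb, sub_eq_add_neg, add_comm, add_left_comm, add_assoc] using hy
    have hlin : A.mulVec xb + B.mulVec yb = 0 := by
      have : A.mulVec xs + B.mulVec ys = A.mulVec x₀ + B.mulVec y₀ := by
        rw [hAB, hz]
      simp only [hxb, hyb, Matrix.mulVec_sub]
      rw [sub_add_sub_comm, this, sub_self]
    have hneg : -(A.mulVec xb) = B.mulVec yb := by
      exact (eq_neg_of_add_eq_zero_right hlin).symm
    have hAxb := h₃ xb yb hx' hy' hneg
    have hBy : B.mulVec yb = 0 := by rw [← hneg, hAxb, neg_zero]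
    have hxb0 := h₁ xb hAxb hx'
    have hyb0 := h₂ yb hBy hy'
    constructor
    · have := sub_eq_zero.mp hxb0
      exact this
    · exact sub_eq_zero.mp hyb0
end

section
/- Let A be an m×n₁ real matrix, B an m×n₂ real matrix, x₀ ∈ ℝ^{n₁}, y₀ ∈ ℝ^{n₂}, and set z = A x₀ + B y₀. Then the generalized demixing problem (GDP) succeeds (i.e., every (x,y) with ‖y‖₁ ≤ ‖y₀‖₁, A x + B y = z, and ‖x‖₁ ≤ ‖x₀‖₁ equals (x₀,y₀)) if and only if all three of the following hold: null(A) ∩ D(‖·‖₁, x₀) = {0}, null(B) ∩ D(‖·‖₁, y₀) = {0}, and (−A·D(‖·‖₁, x₀)) ∩ (B·D(‖·‖₁, y₀)) = {0}, where D(‖·‖₁, a) denotes the descent cone of the ℓ1 norm at a. -/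
/-!
A competitor `(x, y)` of the demixing problem yields descent directions `x - x₀`, `y - y₀` with
`A (x - x₀) + B (y - y₀) = 0`. Conversely, descent directions `u`, `v` with `A u + B v = 0` give
the competitor `(x₀ + τ u, y₀ + τ v)`, once convexity of the ℓ1 norm lets both be taken with a
common step `τ`. So success means that `(0, 0)` is the only such pair, and this splits into the
three conic conditions by taking `v = 0`, `u = 0`, or a general pair.
-/

open Set

section DescentCone

variable {E F G : Type*} [AddCommGroup E] [Module ℝ E] [AddCommGroup F] [Module ℝ F]
  [AddCommGroup G] [Module ℝ G]

def descentCone (f : E → ℝ) (a : E) : Set E :=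
  {h | ∃ τ : ℝ, 0 < τ ∧ f (a + τ • h) ≤ f a}

lemma zero_mem_descentCone (f : E → ℝ) (a : E) : 0 ∈ descentCone f a :=
  ⟨1, one_pos, by simp⟩

lemma sub_mem_descentCone {f : E → ℝ} {a x : E} (hx : f x ≤ f a) : x - a ∈ descentCone f a :=
  ⟨1, one_pos, by simpa using hx⟩

lemma ConvexOn.map_add_smul_le_of_le {f : E → ℝ} (hf : ConvexOn ℝ univ f) {a h : E} {σ τ : ℝ}
    (hσ : 0 < σ) (hστ : σ ≤ τ) (hτ : f (a + τ • h) ≤ f a) : f (a + σ • h) ≤ f a := by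
  have hτ0 : 0 < τ := hσ.trans_le hστ
  have hcombo : a + σ • h = (1 - σ / τ) • a + (σ / τ) • (a + τ • h) := by
    rw [smul_add, smul_smul, div_mul_cancel₀ σ hτ0.ne']
    module
  rw [hcombo]
  refine (hf.le_on_segment' (mem_univ _) (mem_univ _) ?_ (div_nonneg hσ.le hτ0.le)
    (sub_add_cancel _ _)).trans (max_le le_rfl hτ)
  exact sub_nonneg.2 (div_le_one_of_le₀ hστ hτ0.le)

lemma exists_common_descent_step {f : E → ℝ} {g : F → ℝ} (hf : ConvexOn ℝ univ f)
    (hg : ConvexOn ℝ univ g) {a : E} {b : F} {u : E} {v : F} (hu : u ∈ descentCone f a)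
    (hv : v ∈ descentCone g b) :
    ∃ τ : ℝ, 0 < τ ∧ f (a + τ • u) ≤ f a ∧ g (b + τ • v) ≤ g b := by
  obtain ⟨τ₁, hτ₁, hu⟩ := hu
  obtain ⟨τ₂, hτ₂, hv⟩ := hv
  have hτ : 0 < min τ₁ τ₂ := lt_min hτ₁ hτ₂
  exact ⟨min τ₁ τ₂, hτ, hf.map_add_smul_le_of_le hτ (min_le_left _ _) hu,
    hg.map_add_smul_le_of_le hτ (min_le_right _ _) hv⟩

def DemixingSucceeds (f : E → ℝ) (g : F → ℝ) (A : E →ₗ[ℝ] G) (B : F →ₗ[ℝ] G) (x₀ : E) (y₀ : F) :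
    Prop :=
  ∀ x y, g y ≤ g y₀ → A x + B y = A x₀ + B y₀ → f x ≤ f x₀ → x = x₀ ∧ y = y₀

lemma demixingSucceeds_iff {f : E → ℝ} {g : F → ℝ} (hf : ConvexOn ℝ univ f)
    (hg : ConvexOn ℝ univ g) (A : E →ₗ[ℝ] G) (B : F →ₗ[ℝ] G) (x₀ : E) (y₀ : F) :
    DemixingSucceeds f g A B x₀ y₀ ↔
      ∀ u ∈ descentCone f x₀, ∀ v ∈ descentCone g y₀, A u + B v = 0 → u = 0 ∧ v = 0 := by
  constructor
  · intro hsucc u hu v hv huv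
    obtain ⟨τ, hτ, hfu, hgv⟩ := exists_common_descent_step hf hg hu hv
    have hfeas : A (x₀ + τ • u) + B (y₀ + τ • v) = A x₀ + B y₀ := by
      rw [map_add, map_add, map_smul, map_smul, add_add_add_comm, ← smul_add, huv, smul_zero,
        add_zero]
    obtain ⟨hx, hy⟩ := hsucc _ _ hgv hfeas hfu
    rw [add_eq_left, smul_eq_zero] at hx hy
    exact ⟨hx.resolve_left hτ.ne', hy.resolve_left hτ.ne'⟩
  · intro hcones x y hy hfeas hx
    have hdiff : A (x - x₀) + B (y - y₀) = 0 := by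
      rw [map_sub, map_sub, sub_add_sub_comm, hfeas, sub_self]
    obtain ⟨hu, hv⟩ := hcones _ (sub_mem_descentCone hx) _ (sub_mem_descentCone hy) hdiff
    exact ⟨sub_eq_zero.1 hu, sub_eq_zero.1 hv⟩

lemma forall_map_add_map_eq_zero_iff {C : Set E} {D : Set F} (hC : 0 ∈ C) (hD : 0 ∈ D)
    (A : E →ₗ[ℝ] G) (B : F →ₗ[ℝ] G) :
    (∀ u ∈ C, ∀ v ∈ D, A u + B v = 0 → u = 0 ∧ v = 0) ↔
      (∀ u, A u = 0 → u ∈ C → u = 0) ∧ (∀ v, B v = 0 → v ∈ D → v = 0) ∧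
        ∀ u v, u ∈ C → v ∈ D → -A u = B v → A u = 0 := by
  constructor
  · intro h
    refine ⟨fun u hAu hu => (h u hu 0 hD (by simp [hAu])).1,
      fun v hBv hv => (h 0 hC v hv (by simp [hBv])).2, fun u v hu hv huv => ?_⟩
    rw [(h u hu v hv (neg_eq_iff_add_eq_zero.1 huv)).1, map_zero]
  · rintro ⟨hA, hB, hAB⟩ u hu v hv huv
    have hAu : A u = 0 := hAB u v hu hv (neg_eq_iff_add_eq_zero.2 huv)
    rw [hAu, zero_add] at huv
    exact ⟨hA u hAu hu, hB v huv hv⟩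

end DescentCone

lemma convexOn_sum_abs {ι : Type*} [Fintype ι] : ConvexOn ℝ univ (fun x : ι → ℝ => ∑ i, |x i|) := by
  refine ⟨convex_univ, fun x _ y _ a b ha hb _ => ?_⟩
  simp only [Pi.add_apply, Pi.smul_apply, smul_eq_mul, Finset.mul_sum, ← Finset.sum_add_distrib]
  gcongr with i
  calc |a * x i + b * y i| ≤ |a * x i| + |b * y i| := abs_add_le _ _
    _ = a * |x i| + b * |y i| := by rw [abs_mul, abs_mul, abs_of_nonneg ha, abs_of_nonneg hb]

/-- Corollary 1: (GDP) succeeds iff the three conic conditions, stated with descent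
cones of the ℓ1 norm, hold. Membership `h ∈ D(‖·‖₁, a)` is expressed as
`∃ τ > 0, ‖a + τ h‖₁ ≤ ‖a‖₁`. -/
theorem gdp_succeeds_iff_descent_cones {m n₁ n₂ : ℕ}
    (A : Matrix (Fin m) (Fin n₁) ℝ) (B : Matrix (Fin m) (Fin n₂) ℝ)
    (x₀ : Fin n₁ → ℝ) (y₀ : Fin n₂ → ℝ) (z : Fin m → ℝ)
    (hz : z = A.mulVec x₀ + B.mulVec y₀) :
    (∀ x : Fin n₁ → ℝ, ∀ y : Fin n₂ → ℝ,
        (∑ i, |y i|) ≤ (∑ i, |y₀ i|) →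
        A.mulVec x + B.mulVec y = z →
        (∑ i, |x i|) ≤ (∑ i, |x₀ i|) →
        x = x₀ ∧ y = y₀) ↔
      ((∀ h : Fin n₁ → ℝ,
          A.mulVec h = 0 →
          (∃ τ : ℝ, 0 < τ ∧ (∑ i, |x₀ i + τ * h i|) ≤ (∑ i, |x₀ i|)) →
          h = 0) ∧
       (∀ h : Fin n₂ → ℝ,
          B.mulVec h = 0 →
          (∃ τ : ℝ, 0 < τ ∧ (∑ i, |y₀ i + τ * h i|) ≤ (∑ i, |y₀ i|)) →
          h = 0) ∧
       (∀ (u : Fin n₁ → ℝ) (v : Fin n₂ → ℝ),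
          (∃ τ : ℝ, 0 < τ ∧ (∑ i, |x₀ i + τ * u i|) ≤ (∑ i, |x₀ i|)) →
          (∃ τ : ℝ, 0 < τ ∧ (∑ i, |y₀ i + τ * v i|) ≤ (∑ i, |y₀ i|)) →
          -(A.mulVec u) = B.mulVec v →
          A.mulVec u = 0)) := by
  subst hz
  -- `descentCone (fun x => ∑ i, |x i|) a` and `A.mulVecLin` unfold definitionally to the
  -- coordinatewise formulation above.
  exact (demixingSucceeds_iff convexOn_sum_abs convexOn_sum_abs A.mulVecLin B.mulVecLin x₀ y₀).trans
    (forall_map_add_map_eq_zero_iff (zero_mem_descentCone _ _) (zero_mem_descentCone _ _) _ _)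
end

section
/- Let A be an m×n₁ real matrix, B an m×n₂ real matrix, x₀ ∈ ℝ^{n₁}, y₀ ∈ ℝ^{n₂}. Then (−A·S(x₀)) ∩ (B·S(y₀)) = {0} if and only if (−A·D(‖·‖₁, x₀)) ∩ (B·D(‖·‖₁, y₀)) = {0}; that is, [whenever ‖x₀ + x̄‖₁ ≤ ‖x₀‖₁, ‖y₀ + ȳ‖₁ ≤ ‖y₀‖₁ and −A x̄ = B ȳ, then A x̄ = 0] if and only if [whenever u ∈ D(‖·‖₁, x₀), v ∈ D(‖·‖₁, y₀) and −A u = B v, then A u = 0]. -/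
/-- If `‖a + σ u‖₁ ≤ ‖a‖₁` and `0 < τ ≤ σ`, then `‖a + τ u‖₁ ≤ ‖a‖₁`. -/
lemma shrink_l1 {n : ℕ} (a u : Fin n → ℝ) {σ τ : ℝ} (hτ : 0 < τ) (hστ : τ ≤ σ)
    (h : (∑ i, |a i + σ * u i|) ≤ ∑ i, |a i|) :
    (∑ i, |a i + τ * u i|) ≤ ∑ i, |a i| := by
  have hσ : 0 < σ := lt_of_lt_of_le hτ hστ
  set t : ℝ := τ / σ with ht
  have ht0 : 0 < t := div_pos hτ hσ
  have ht1 : t ≤ 1 := (div_le_one hσ).mpr hστ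
  have key : ∀ i, |a i + τ * u i| ≤ (1 - t) * |a i| + t * |a i + σ * u i| := by
    intro i
    have heq : a i + τ * u i = (1 - t) * a i + t * (a i + σ * u i) := by
      rw [ht]; field_simp; ring
    rw [heq]
    calc |(1 - t) * a i + t * (a i + σ * u i)|
        ≤ |(1 - t) * a i| + |t * (a i + σ * u i)| := abs_add_le _ _
      _ = (1 - t) * |a i| + t * |a i + σ * u i| := by
          rw [abs_mul, abs_mul, abs_of_nonneg (by linarith : (0:ℝ) ≤ 1 - t),
            abs_of_nonneg (le_of_lt ht0)]
  calc (∑ i, |a i + τ * u i|)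
      ≤ ∑ i, ((1 - t) * |a i| + t * |a i + σ * u i|) := Finset.sum_le_sum fun i _ => key i
    _ = (1 - t) * (∑ i, |a i|) + t * (∑ i, |a i + σ * u i|) := by
        rw [Finset.sum_add_distrib, Finset.mul_sum, Finset.mul_sum]
    _ ≤ (1 - t) * (∑ i, |a i|) + t * (∑ i, |a i|) := by
        have := mul_le_mul_of_nonneg_left h (le_of_lt ht0); linarith
    _ = ∑ i, |a i| := by ring

/-- `(-A·S(x₀)) ∩ (B·S(y₀)) = {0}` iff
`(-A·D(‖·‖₁, x₀)) ∩ (B·D(‖·‖₁, y₀)) = {0}`. -/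
theorem image_ball_inter_iff_image_cone_inter {m n₁ n₂ : ℕ}
    (A : Matrix (Fin m) (Fin n₁) ℝ) (B : Matrix (Fin m) (Fin n₂) ℝ)
    (x₀ : Fin n₁ → ℝ) (y₀ : Fin n₂ → ℝ) :
    (∀ (xb : Fin n₁ → ℝ) (yb : Fin n₂ → ℝ),
        (∑ i, |x₀ i + xb i|) ≤ (∑ i, |x₀ i|) →
        (∑ i, |y₀ i + yb i|) ≤ (∑ i, |y₀ i|) →
        -(A.mulVec xb) = B.mulVec yb →
        A.mulVec xb = 0) ↔
      (∀ (u : Fin n₁ → ℝ) (v : Fin n₂ → ℝ),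
        (∃ τ : ℝ, 0 < τ ∧ (∑ i, |x₀ i + τ * u i|) ≤ (∑ i, |x₀ i|)) →
        (∃ τ : ℝ, 0 < τ ∧ (∑ i, |y₀ i + τ * v i|) ≤ (∑ i, |y₀ i|)) →
        -(A.mulVec u) = B.mulVec v →
        A.mulVec u = 0) := by
  constructor
  · intro H u v ⟨τ₁, hτ₁, h₁⟩ ⟨τ₂, hτ₂, h₂⟩ hAB
    set τ := min τ₁ τ₂ with hτdef
    have hτ : 0 < τ := lt_min hτ₁ hτ₂
    have h1' : (∑ i, |x₀ i + τ * u i|) ≤ ∑ i, |x₀ i| :=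
      shrink_l1 x₀ u hτ (min_le_left _ _) h₁
    have h2' : (∑ i, |y₀ i + τ * v i|) ≤ ∑ i, |y₀ i| :=
      shrink_l1 y₀ v hτ (min_le_right _ _) h₂
    have hmul : A.mulVec (τ • u) = τ • A.mulVec u := by
      rw [Matrix.mulVec_smul]
    have hmulB : B.mulVec (τ • v) = τ • B.mulVec v := by
      rw [Matrix.mulVec_smul]
    have := H (τ • u) (τ • v)
      (by simpa [smul_eq_mul] using h1')
      (by simpa [smul_eq_mul] using h2')
      (by rw [hmul, hmulB, ← smul_neg, hAB])
    rw [hmul] at this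
    have := smul_eq_zero.mp this
    rcases this with h | h
    · exact absurd h (ne_of_gt hτ)
    · exact h
  · intro H xb yb h₁ h₂ hAB
    exact H xb yb ⟨1, one_pos, by simpa using h₁⟩ ⟨1, one_pos, by simpa using h₂⟩ hAB
end

section
/- Let A be an m×n₁ real matrix, B an m×n₂ real matrix, x₀ ∈ ℝ^{n₁}, y₀ ∈ ℝ^{n₂}. Assume: (i) every h with A h = 0 and ‖x₀ + h‖₁ ≤ ‖x₀‖₁ is zero; (ii) every h with B h = 0 and ‖y₀ + h‖₁ ≤ ‖y₀‖₁ is zero; (iii) whenever ‖x₀ + x̄‖₁ ≤ ‖x₀‖₁, ‖y₀ + ȳ‖₁ ≤ ‖y₀‖₁ and −A x̄ = B ȳ, then A x̄ = 0. If (x̂, ŷ) is an optimal solution of the problem: minimize ‖x₀ + x‖₁ subject to A x + B y = 0 and ‖y₀ + y‖₁ ≤ ‖y₀‖₁ (i.e., (x̂, ŷ) is feasible and ‖x₀ + x̂‖₁ ≤ ‖x₀ + x‖₁ for every feasible (x, y)), then x̂ = 0 and ŷ = 0. -/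
/-- Under the three conditions of Theorem 1, any optimal solution of
`min ‖x₀ + x‖₁ s.t. A x + B y = 0 and ‖y₀ + y‖₁ ≤ ‖y₀‖₁` is `(0, 0)`. -/
theorem opt_pair_zero {m n₁ n₂ : ℕ}
    (A : Matrix (Fin m) (Fin n₁) ℝ) (B : Matrix (Fin m) (Fin n₂) ℝ)
    (x₀ : Fin n₁ → ℝ) (y₀ : Fin n₂ → ℝ)
    (h₁ : ∀ h : Fin n₁ → ℝ,
        A.mulVec h = 0 → (∑ i, |x₀ i + h i|) ≤ (∑ i, |x₀ i|) → h = 0)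
    (h₂ : ∀ h : Fin n₂ → ℝ,
        B.mulVec h = 0 → (∑ i, |y₀ i + h i|) ≤ (∑ i, |y₀ i|) → h = 0)
    (h₃ : ∀ (xb : Fin n₁ → ℝ) (yb : Fin n₂ → ℝ),
        (∑ i, |x₀ i + xb i|) ≤ (∑ i, |x₀ i|) →
        (∑ i, |y₀ i + yb i|) ≤ (∑ i, |y₀ i|) →
        -(A.mulVec xb) = B.mulVec yb →
        A.mulVec xb = 0)
    (xh : Fin n₁ → ℝ) (yh : Fin n₂ → ℝ)
    (hfeas₁ : A.mulVec xh + B.mulVec yh = 0)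
    (hfeas₂ : (∑ i, |y₀ i + yh i|) ≤ (∑ i, |y₀ i|))
    (hopt : ∀ (x : Fin n₁ → ℝ) (y : Fin n₂ → ℝ),
        A.mulVec x + B.mulVec y = 0 →
        (∑ i, |y₀ i + y i|) ≤ (∑ i, |y₀ i|) →
        (∑ i, |x₀ i + xh i|) ≤ (∑ i, |x₀ i + x i|)) :
    xh = 0 ∧ yh = 0 := by
  have hzero : A.mulVec (0 : Fin n₁ → ℝ) + B.mulVec (0 : Fin n₂ → ℝ) = 0 := by
    simp [Matrix.mulVec_zero]
  have hy0 : (∑ i, |y₀ i + (0 : Fin n₂ → ℝ) i|) ≤ (∑ i, |y₀ i|) := by simp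
  have hxle : (∑ i, |x₀ i + xh i|) ≤ (∑ i, |x₀ i|) := by
    simpa using hopt 0 0 hzero hy0
  have hAB : -(A.mulVec xh) = B.mulVec yh := by
    have := hfeas₁
    linear_combination (norm := abel) -this
  have hAx : A.mulVec xh = 0 := h₃ xh yh hxle hfeas₂ hAB
  have hBy : B.mulVec yh = 0 := by rw [← hAB, hAx, neg_zero]
  exact ⟨h₁ xh hAx hxle, h₂ yh hBy hfeas₂⟩
end
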